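/- Let x^1, …, x^n be pairwise distinct points in ℝ^d, let Φ ∈ ℝ^{n×n} have entries Φ_{ij} = ‖x^i − x^j‖₂³, and let P ∈ ℝ^{n×(d+1)} have i-th row ((x^i)ᵀ, 1). If rank(P) = d + 1, then for every F ∈ ℝ^n there exist unique γ ∈ ℝ^n and λ ∈ ℝ^{d+1} satisfying Φγ + Pλ = F and Pᵀγ = 0; hence the cubic RBF interpolant of any data values F on these points exists and is uniquely determined. -/

import Mathlib

open Matrix MeasureTheory Metric Finset Function Filter Topology
open scoped RealInnerProductSpace

/-!
On the line, for weights with `∑ γ i = ∑ γ i * t i = 0` one has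
`∑ i, ∑ j, γ i * γ j * |t i - t j| ^ 3 = 12 * ∫ (∑ i, γ i * (t i - u)₊) ^ 2 du`,
because `|a - b| ^ 3` and `12 * ∫ (a - u)₊ * (b - u)₊ du` differ by terms of the form `f a * g b`
with `f` or `g` affine, which the moment conditions annihilate. The form is therefore nonnegative,
and it vanishes only if the piecewise linear function `u ↦ ∑ i, γ i * (t i - u)₊` does, which
for distinct nodes forces every kink `γ i` to vanish.

In an inner product space, `‖z‖ ^ 3` is a fixed multiple of the average of `|⟪z, u⟫| ^ 3` over
the unit ball (the average is invariant under reflections), so `γᵀ Φ γ` is an average of the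
one-dimensional forms of the projected nodes `⟪x i, u⟫`; almost every `u` keeps these distinct.
Hence `Pᵀ γ = 0` and `γᵀ Φ γ = 0` force `γ = 0`, and since `P` has full column rank, the square
system is injective, hence bijective.
-/

theorem integral_mul_sub_sub (a b m M : ℝ) :
    ∫ u in m..M, (a - u) * (b - u) =
      (a * b * M - (a + b) * M ^ 2 / 2 + M ^ 3 / 3)
        - (a * b * m - (a + b) * m ^ 2 / 2 + m ^ 3 / 3) := by
  refine intervalIntegral.integral_eq_sub_of_hasDerivAt
    (f := fun u => a * b * u - (a + b) * u ^ 2 / 2 + u ^ 3 / 3) (fun u _ => ?_)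
    (Continuous.intervalIntegrable (by fun_prop : Continuous fun u : ℝ => (a - u) * (b - u)) _ _)
  refine ((((hasDerivAt_id' u).const_mul (a * b)).sub
    (((hasDerivAt_pow 2 u).const_mul (a + b)).div_const 2)).add
      ((hasDerivAt_pow 3 u).div_const 3)).congr_deriv ?_
  push_cast
  ring

theorem integral_max_sub_mul_max_sub {a b R : ℝ} (ha : |a| ≤ R) (hb : |b| ≤ R) :
    12 * ∫ u in -R..R, max (a - u) 0 * max (b - u) 0 =
      |a - b| ^ 3 - (a + R) ^ 3 - (b + R) ^ 3 + 3 * (a + R) ^ 2 * (b + R)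
        + 3 * (a + R) * (b + R) ^ 2 := by
  wlog hab : a ≤ b generalizing a b
  · simp_rw [mul_comm (max (a - _) 0), this hb ha (le_of_not_ge hab), abs_sub_comm b a]
    ring
  obtain ⟨hRa, haR⟩ := abs_le.1 ha
  have hcont : Continuous fun u : ℝ => max (a - u) 0 * max (b - u) 0 := by fun_prop
  rw [← intervalIntegral.integral_add_adjacent_intervals (hcont.intervalIntegrable (-R) a)
    (hcont.intervalIntegrable a R)]
  have hleft : ∫ u in -R..a, max (a - u) 0 * max (b - u) 0 = ∫ u in -R..a, (a - u) * (b - u) := by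
    refine intervalIntegral.integral_congr fun u hu => ?_
    rw [Set.uIcc_of_le hRa] at hu
    rw [max_eq_left (sub_nonneg.2 hu.2), max_eq_left (sub_nonneg.2 (hu.2.trans hab))]
  have hright : ∫ u in a..R, max (a - u) 0 * max (b - u) 0 = 0 := by
    refine (intervalIntegral.integral_congr (g := fun _ => 0) fun u hu => ?_).trans
      intervalIntegral.integral_zero
    rw [Set.uIcc_of_le haR] at hu
    simp only [max_eq_right (sub_nonpos.2 hu.1), zero_mul]
  rw [hleft, hright, integral_mul_sub_sub, add_zero, abs_of_nonpos (sub_nonpos.2 hab)]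
  ring

section LinearSpline

variable {ι : Type*} [Fintype ι]

def linearSpline (t γ : ι → ℝ) (u : ℝ) : ℝ := ∑ i, γ i * max (t i - u) 0

theorem continuous_linearSpline (t γ : ι → ℝ) : Continuous (linearSpline t γ) := by
  unfold linearSpline; fun_prop

theorem linearSpline_eq_zero_of_forall_le {t γ : ι → ℝ} (h0 : ∑ i, γ i = 0)
    (h1 : ∑ i, γ i * t i = 0) {u : ℝ} (hu : ∀ i, u ≤ t i) : linearSpline t γ u = 0 := by
  simp only [linearSpline, fun i => max_eq_left (sub_nonneg.2 (hu i)), mul_sub, sum_sub_distrib,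
    ← sum_mul, h0, h1, zero_mul, sub_zero]

theorem linearSpline_eq_zero_of_forall_ge {t : ι → ℝ} (γ : ι → ℝ) {u : ℝ} (hu : ∀ i, t i ≤ u) :
    linearSpline t γ u = 0 := by
  simp [linearSpline, fun i => max_eq_right (sub_nonpos.2 (hu i))]

theorem max_sub_secondDiff_self {h : ℝ} (hh : 0 ≤ h) (c : ℝ) :
    max (c - (c - h)) 0 - 2 * max (c - c) 0 + max (c - (c + h)) 0 = h := by
  simp [hh]

theorem max_sub_secondDiff_of_le_abs {s c h : ℝ} (hh : 0 ≤ h) (hsc : h ≤ |s - c|) :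
    max (s - (c - h)) 0 - 2 * max (s - c) 0 + max (s - (c + h)) 0 = 0 := by
  rcases le_total s c with hs | hs
  · rw [abs_of_nonpos (sub_nonpos.2 hs)] at hsc
    simp only [max_eq_right (by linarith : s - (c - h) ≤ 0), max_eq_right (by linarith : s - c ≤ 0),
      max_eq_right (by linarith : s - (c + h) ≤ 0)]
    ring
  · rw [abs_of_nonneg (sub_nonneg.2 hs)] at hsc
    simp only [max_eq_left (by linarith : 0 ≤ s - (c - h)), max_eq_left (by linarith : 0 ≤ s - c),
      max_eq_left (by linarith : 0 ≤ s - (c + h))]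
    ring

theorem linearSpline_secondDiff (t γ : ι → ℝ) {i : ι} {h : ℝ} (hh : 0 ≤ h)
    (hsep : ∀ j ≠ i, h ≤ |t j - t i|) :
    linearSpline t γ (t i - h) - 2 * linearSpline t γ (t i) + linearSpline t γ (t i + h)
      = γ i * h := by
  calc _ = ∑ j, γ j * (max (t j - (t i - h)) 0 - 2 * max (t j - t i) 0
          + max (t j - (t i + h)) 0) := by
        simp only [linearSpline, mul_sum, ← sum_sub_distrib, ← sum_add_distrib]
        exact sum_congr rfl fun j _ => by ring
    _ = γ i * h := by
        rw [sum_eq_single i (fun j _ hj => by rw [max_sub_secondDiff_of_le_abs hh (hsep j hj),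
          mul_zero]) (by simp), max_sub_secondDiff_self hh]

theorem eq_zero_of_linearSpline_eq_zero {t γ : ι → ℝ} (ht : Injective t)
    (h : linearSpline t γ = 0) : γ = 0 := by
  funext i
  obtain ⟨δ, hsep, hδ⟩ : ∃ δ : ℝ, (∀ j ≠ i, δ ≤ |t j - t i|) ∧ 0 < δ := by
    have hsmall : ∀ᶠ δ in 𝓝[>] (0 : ℝ), ∀ j ≠ i, δ ≤ |t j - t i| := by
      refine eventually_all.2 fun j => ?_
      by_cases hj : j = i
      · exact .of_forall fun _ hji => absurd hj hji
      · have hpos : 0 < |t j - t i| := abs_pos.2 (sub_ne_zero.2 (ht.ne hj))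
        exact ((eventually_lt_nhds hpos).filter_mono nhdsWithin_le_nhds).mono
          fun δ hδ _ => hδ.le
    exact (hsmall.and self_mem_nhdsWithin).exists
  have := linearSpline_secondDiff t γ hδ.le hsep
  simp only [h, Pi.zero_apply, mul_zero, sub_zero, add_zero] at this
  exact (mul_eq_zero.1 this.symm).resolve_right hδ.ne'

theorem linearSpline_eq_zero_of_integral_sq_eq_zero {t γ : ι → ℝ} (h0 : ∑ i, γ i = 0)
    (h1 : ∑ i, γ i * t i = 0) {R : ℝ} (hR : ∀ i, |t i| ≤ R)
    (hint : ∫ u in -R..R, linearSpline t γ u ^ 2 = 0) : linearSpline t γ = 0 := by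
  have hcont := continuous_linearSpline t γ
  rw [intervalIntegral.integral_eq_zero_iff_of_nonneg_ae (.of_forall fun u => sq_nonneg _)
    ((hcont.pow 2).intervalIntegrable _ _)] at hint
  refine (hcont.ae_eq_iff_eq volume continuous_const).1 ?_
  have hIoc : ∀ᵐ u, u ∈ Set.Ioc (-R) R → linearSpline t γ u = 0 := by
    filter_upwards [(ae_restrict_iff' (measurableSet_Ioc.union measurableSet_Ioc)).1 hint]
      with u hu hmem
    exact pow_eq_zero_iff two_ne_zero |>.1 (hu (.inl hmem))
  filter_upwards [hIoc] with u hu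
  by_cases huR : u ∈ Set.Ioc (-R) R
  · exact hu huR
  rcases not_and_or.1 huR with hu | hu
  · exact linearSpline_eq_zero_of_forall_le h0 h1 fun i => by linarith [(abs_le.1 (hR i)).1]
  · exact linearSpline_eq_zero_of_forall_ge γ fun i => by linarith [(abs_le.1 (hR i)).2]

theorem sum_mul_mul_abs_sub_pow_three_eq_integral {t γ : ι → ℝ} (h0 : ∑ i, γ i = 0)
    (h1 : ∑ i, γ i * t i = 0) {R : ℝ} (hR : ∀ i, |t i| ≤ R) :
    ∑ i, ∑ j, γ i * γ j * |t i - t j| ^ 3 = 12 * ∫ u in -R..R, linearSpline t γ u ^ 2 := by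
  have hsplit : ∀ f g : ι → ℝ,
      ∑ i, ∑ j, γ i * γ j * (f i * g j) = (∑ i, γ i * f i) * ∑ j, γ j * g j := by
    intro f g
    rw [sum_mul_sum]
    exact sum_congr rfl fun i _ => sum_congr rfl fun j _ => by ring
  have hshift : ∑ i, γ i * (t i + R) = 0 := by
    simp only [mul_add, sum_add_distrib, h1, ← sum_mul, h0, zero_mul, add_zero]
  have hsq : ∀ u, linearSpline t γ u ^ 2
      = ∑ i, ∑ j, γ i * γ j * (max (t i - u) 0 * max (t j - u) 0) := by
    intro u
    rw [linearSpline, sq, sum_mul_sum]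
    exact sum_congr rfl fun i _ => sum_congr rfl fun j _ => by ring
  have hint : ∀ i j, IntervalIntegrable
      (fun u => γ i * γ j * (max (t i - u) 0 * max (t j - u) 0)) volume (-R) R :=
    fun i j => Continuous.intervalIntegrable (by fun_prop) _ _
  simp_rw [hsq]
  rw [intervalIntegral.integral_finsetSum fun i _ =>
    Continuous.intervalIntegrable (by fun_prop) _ _]
  simp_rw [intervalIntegral.integral_finsetSum fun j _ => hint _ j,
    intervalIntegral.integral_const_mul, mul_sum]
  -- Each non-cubic term is written as `f (t i) * g (t j)` (hence the factors `1`), so that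
  -- `hsplit` turns it into a product of two moments, one of which vanishes.
  have hterm : ∀ i j, γ i * γ j * (|t i - t j| ^ 3 - (t i + R) ^ 3 - (t j + R) ^ 3
      + 3 * (t i + R) ^ 2 * (t j + R) + 3 * (t i + R) * (t j + R) ^ 2)
      = γ i * γ j * |t i - t j| ^ 3 - γ i * γ j * ((t i + R) ^ 3 * 1)
        - γ i * γ j * (1 * (t j + R) ^ 3) + 3 * (γ i * γ j * ((t i + R) ^ 2 * (t j + R)))
        + 3 * (γ i * γ j * ((t i + R) * (t j + R) ^ 2)) := fun i j => by ring
  simp_rw [mul_left_comm (12 : ℝ), integral_max_sub_mul_max_sub (hR _) (hR _), hterm,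
    sum_add_distrib, sum_sub_distrib, ← mul_sum, hsplit, mul_one, h0, hshift]
  simp

theorem abs_le_sum_abs (t : ι → ℝ) (i : ι) : |t i| ≤ ∑ j, |t j| :=
  single_le_sum (fun j _ => abs_nonneg (t j)) (mem_univ i)

theorem sum_mul_mul_abs_sub_pow_three_nonneg {t γ : ι → ℝ} (h0 : ∑ i, γ i = 0)
    (h1 : ∑ i, γ i * t i = 0) : 0 ≤ ∑ i, ∑ j, γ i * γ j * |t i - t j| ^ 3 := by
  rw [sum_mul_mul_abs_sub_pow_three_eq_integral h0 h1 (abs_le_sum_abs t)]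
  have hR : 0 ≤ ∑ j, |t j| := sum_nonneg fun j _ => abs_nonneg (t j)
  exact mul_nonneg (by norm_num)
    (intervalIntegral.integral_nonneg (by linarith) fun u _ => sq_nonneg _)

theorem eq_zero_of_sum_mul_mul_abs_sub_pow_three_eq_zero {t γ : ι → ℝ} (ht : Injective t)
    (h0 : ∑ i, γ i = 0) (h1 : ∑ i, γ i * t i = 0)
    (hQ : ∑ i, ∑ j, γ i * γ j * |t i - t j| ^ 3 = 0) : γ = 0 := by
  rw [sum_mul_mul_abs_sub_pow_three_eq_integral h0 h1 (abs_le_sum_abs t)] at hQ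
  exact eq_zero_of_linearSpline_eq_zero ht
    (linearSpline_eq_zero_of_integral_sq_eq_zero h0 h1 (abs_le_sum_abs t) (by linarith))

end LinearSpline

section Directions

variable {E : Type*} [NormedAddCommGroup E] [InnerProductSpace ℝ E] [FiniteDimensional ℝ E]
  [MeasurableSpace E] [BorelSpace E]

theorem setIntegral_closedBall_comp_inner_eq_of_norm_eq (f : ℝ → ℝ) {v w : E} (h : ‖v‖ = ‖w‖)
    (r : ℝ) : ∫ u in closedBall 0 r, f ⟪v, u⟫ = ∫ u in closedBall 0 r, f ⟪w, u⟫ := by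
  set σ := Submodule.reflection (ℝ ∙ (w - v))ᗮ
  have hσ : σ w = v := Submodule.reflection_sub h.symm
  have hball : σ ⁻¹' closedBall 0 r = closedBall 0 r := by
    ext u; simp
  rw [← σ.measurePreserving.setIntegral_preimage_emb σ.toHomeomorph.measurableEmbedding, hball]
  simp_rw [← hσ, σ.inner_map_map]

theorem setIntegral_closedBall_abs_inner_pow {e : E} (he : ‖e‖ = 1) (p : ℕ) (z : E) :
    ∫ u in closedBall (0 : E) 1, |⟪z, u⟫| ^ p
      = (∫ u in closedBall (0 : E) 1, |⟪e, u⟫| ^ p) * ‖z‖ ^ p := by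
  obtain ⟨c, v, hv, rfl⟩ : ∃ (c : ℝ) (v : E), ‖v‖ = 1 ∧ z = c • v := by
    rcases eq_or_ne z 0 with rfl | hz
    · exact ⟨0, e, he, by simp⟩
    · exact ⟨‖z‖, ‖z‖⁻¹ • z, by simp [norm_smul, hz], by simp [smul_smul, hz]⟩
  simp_rw [real_inner_smul_left, abs_mul, mul_pow, norm_smul, hv, mul_one, Real.norm_eq_abs,
    integral_const_mul,
    setIntegral_closedBall_comp_inner_eq_of_norm_eq (|·| ^ p) (hv.trans he.symm)]
  ring

theorem ae_inner_ne_zero {v : E} (hv : v ≠ 0) : ∀ᵐ u ∂(volume : Measure E), ⟪v, u⟫ ≠ 0 := by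
  have hker : LinearMap.ker (innerₛₗ ℝ v) ≠ ⊤ := fun h =>
    hv (inner_self_eq_zero.1 (LinearMap.mem_ker.1 (h ▸ Submodule.mem_top : v ∈ _)))
  rw [ae_iff]
  simp only [not_not]
  exact Measure.addHaar_submodule volume _ hker

theorem ae_injective_inner {ι : Type*} [Finite ι] {x : ι → E} (hx : Injective x) :
    ∀ᵐ u ∂(volume : Measure E), Injective fun i => ⟪x i, u⟫ := by
  have hpair : ∀ i j, ∀ᵐ u ∂(volume : Measure E), ⟪x i, u⟫ = ⟪x j, u⟫ → i = j := by
    intro i j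
    by_cases hij : i = j
    · exact .of_forall fun _ _ => hij
    filter_upwards [ae_inner_ne_zero (sub_ne_zero.2 (hx.ne hij))] with u hu h
    exact absurd (by rw [inner_sub_left, h, sub_self]) hu
  filter_upwards [ae_all_iff.2 fun i => ae_all_iff.2 (hpair i)] with u hu using hu

theorem setIntegral_closedBall_sum_mul_mul_abs_inner_sub_pow {ι : Type*} [Fintype ι] {e : E}
    (he : ‖e‖ = 1) (p : ℕ) (x : ι → E) (γ : ι → ℝ) :
    ∫ u in closedBall (0 : E) 1, ∑ i, ∑ j, γ i * γ j * |⟪x i, u⟫ - ⟪x j, u⟫| ^ p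
      = (∫ u in closedBall (0 : E) 1, |⟪e, u⟫| ^ p) * ∑ i, ∑ j, γ i * γ j * ‖x i - x j‖ ^ p := by
  have hint : ∀ i j, IntegrableOn (fun u => γ i * γ j * |⟪x i, u⟫ - ⟪x j, u⟫| ^ p)
      (closedBall (0 : E) 1) :=
    fun i j => (Continuous.continuousOn (by fun_prop)).integrableOn_compact
      (isCompact_closedBall _ _)
  rw [integral_finsetSum _ fun i _ => integrable_finsetSum _ fun j _ => hint i j]
  simp_rw [integral_finsetSum _ fun j _ => hint _ j, integral_const_mul, ← inner_sub_left,
    fun i j => setIntegral_closedBall_abs_inner_pow he p (x i - x j), mul_sum]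
  exact sum_congr rfl fun i _ => sum_congr rfl fun j _ => by ring

theorem eq_zero_of_sum_mul_mul_norm_sub_pow_three_eq_zero {ι : Type*} [Fintype ι] {x : ι → E}
    (hx : Injective x) {γ : ι → ℝ} (h0 : ∑ i, γ i = 0) (h1 : ∑ i, γ i • x i = 0)
    (hQ : ∑ i, ∑ j, γ i * γ j * ‖x i - x j‖ ^ 3 = 0) : γ = 0 := by
  rcases subsingleton_or_nontrivial E with hE | hE
  · have : Subsingleton ι := hx.subsingleton
    funext i
    rwa [Fintype.sum_subsingleton _ i] at h0
  obtain ⟨e, he⟩ := exists_norm_eq E zero_le_one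
  have hmom : ∀ u, ∑ i, γ i * ⟪x i, u⟫ = 0 := fun u => by
    simp_rw [← real_inner_smul_left, ← sum_inner, h1, inner_zero_left]
  have hF : ∀ᵐ u ∂volume.restrict (closedBall (0 : E) 1),
      ∑ i, ∑ j, γ i * γ j * |⟪x i, u⟫ - ⟪x j, u⟫| ^ 3 = 0 := by
    refine (setIntegral_eq_zero_iff_of_nonneg_ae
      (.of_forall fun u => sum_mul_mul_abs_sub_pow_three_nonneg h0 (hmom u))
      ((Continuous.continuousOn (by fun_prop)).integrableOn_compact
        (isCompact_closedBall _ _))).1 ?_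
    rw [setIntegral_closedBall_sum_mul_mul_abs_inner_sub_pow he, hQ, mul_zero]
  have : (ae (volume.restrict (closedBall (0 : E) 1))).NeBot :=
    ae_neBot.2 (by simp [(measure_closedBall_pos volume (0 : E) one_pos).ne'])
  obtain ⟨u, hFu, hu⟩ := (hF.and (ae_restrict_of_ae (ae_injective_inner hx))).exists
  exact eq_zero_of_sum_mul_mul_abs_sub_pow_three_eq_zero hu h0 (hmom u) hFu

end Directions

section SaddlePoint

variable {K : Type*} [Field K] {m k : Type*} [Fintype k]

theorem Matrix.mulVec_injective_of_rank_eq {P : Matrix m k K} (h : P.rank = Fintype.card k) :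
    Injective P.mulVec := by
  have hker := LinearMap.finrank_range_add_finrank_ker P.mulVecLin
  rw [← Matrix.rank, h, Module.finrank_fintype_fun_eq_card, add_eq_left,
    Submodule.finrank_eq_zero] at hker
  exact LinearMap.ker_eq_bot.1 hker

theorem Matrix.dotProduct_mulVec_self [Fintype m] {R : Type*} [CommSemiring R]
    (A : Matrix m m R) (v : m → R) :
    v ⬝ᵥ (A *ᵥ v) = ∑ i, ∑ j, v i * v j * A i j := by
  simp only [dotProduct, mulVec, mul_sum]
  exact sum_congr rfl fun i _ => sum_congr rfl fun j _ => by ring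

theorem saddlePoint_homogeneous_eq_zero [Fintype m] {R : Type*} [CommRing R] {Φ : Matrix m m R}
    {P : Matrix m k R} (hP : Injective P.mulVec)
    (hΦ : ∀ γ, Pᵀ *ᵥ γ = 0 → γ ⬝ᵥ (Φ *ᵥ γ) = 0 → γ = 0) {γ : m → R} {l : k → R}
    (h₁ : Φ *ᵥ γ + P *ᵥ l = 0) (h₂ : Pᵀ *ᵥ γ = 0) : γ = 0 ∧ l = 0 := by
  have hγ : γ = 0 := hΦ γ h₂ (by
    have hPl : γ ⬝ᵥ (P *ᵥ l) = 0 := by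
      rw [dotProduct_mulVec, ← mulVec_transpose, h₂, zero_dotProduct]
    simpa [dotProduct_add, hPl] using congrArg (γ ⬝ᵥ ·) h₁)
  subst hγ
  refine ⟨rfl, hP ?_⟩
  rwa [mulVec_zero, zero_add, ← mulVec_zero P] at h₁

theorem existsUnique_saddlePoint [Fintype m] {Φ : Matrix m m K} {P : Matrix m k K}
    (h : ∀ γ l, Φ *ᵥ γ + P *ᵥ l = 0 → Pᵀ *ᵥ γ = 0 → γ = 0 ∧ l = 0) (F : m → K) (G : k → K) :
    ∃! gl : (m → K) × (k → K), Φ *ᵥ gl.1 + P *ᵥ gl.2 = F ∧ Pᵀ *ᵥ gl.1 = G := by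
  let L : (m → K) × (k → K) →ₗ[K] (m → K) × (k → K) :=
    (Φ.mulVecLin ∘ₗ LinearMap.fst K _ _ + P.mulVecLin ∘ₗ LinearMap.snd K _ _).prod
      (Pᵀ.mulVecLin ∘ₗ LinearMap.fst K _ _)
  have hL : ∀ gl, L gl = (Φ *ᵥ gl.1 + P *ᵥ gl.2, Pᵀ *ᵥ gl.1) := fun _ => rfl
  have hinj : Injective L := by
    rw [← LinearMap.ker_eq_bot, Submodule.eq_bot_iff]
    rintro ⟨γ, l⟩ hγl
    obtain ⟨h₁, h₂⟩ := Prod.ext_iff.1 ((hL _).symm.trans hγl)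
    obtain ⟨rfl, rfl⟩ := h γ l h₁ h₂
    rfl
  simpa only [hL, Prod.ext_iff] using
    (show Bijective L from ⟨hinj, LinearMap.injective_iff_surjective.1 hinj⟩).existsUnique (F, G)

end SaddlePoint

theorem sum_eq_zero_and_sum_smul_eq_zero_of_transpose_mulVec_eq_zero {ι : Type*} [Fintype ι]
    {d : ℕ} {x : ι → EuclideanSpace ℝ (Fin d)} {P : Matrix ι (Fin (d + 1)) ℝ}
    (hP₁ : ∀ i (j : Fin d), P i (Fin.castSucc j) = x i j) (hP₂ : ∀ i, P i (Fin.last d) = 1)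
    {γ : ι → ℝ} (hγ : Pᵀ *ᵥ γ = 0) : ∑ i, γ i = 0 ∧ ∑ i, γ i • x i = 0 := by
  have hcol : ∀ j, ∑ i, γ i * P i j = 0 := fun j => by
    simpa [mulVec_transpose, vecMul, dotProduct] using congrFun hγ j
  refine ⟨by simpa [hP₂] using hcol (Fin.last d), ?_⟩
  ext j
  simpa [hP₁] using hcol j.castSucc

/-- **Existence and uniqueness of the cubic RBF interpolant.**
For pairwise distinct points `x 1, …, x n` in `ℝ^d`, with `Φ i j = ‖x i − x j‖₂³`
and `P` the `n × (d+1)` matrix whose `i`-th row is `((x i)ᵀ, 1)`, if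
`rank P = d + 1`, then for every data vector `F ∈ ℝ^n` there exist unique
`γ ∈ ℝ^n` and `λ ∈ ℝ^{d+1}` with `Φγ + Pλ = F` and `Pᵀγ = 0`. -/
theorem cubic_rbf_interpolant_exists_unique
    (d n : ℕ) (x : Fin n → EuclideanSpace ℝ (Fin d))
    (hx : Function.Injective x)
    (Φ : Matrix (Fin n) (Fin n) ℝ)
    (hΦ : ∀ i j, Φ i j = ‖x i - x j‖ ^ 3)
    (P : Matrix (Fin n) (Fin (d + 1)) ℝ)
    (hP₁ : ∀ i (j : Fin d), P i (Fin.castSucc j) = x i j)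
    (hP₂ : ∀ i, P i (Fin.last d) = 1)
    (hrank : P.rank = d + 1) :
    ∀ F : Fin n → ℝ,
      ∃! gl : (Fin n → ℝ) × (Fin (d + 1) → ℝ),
        Φ *ᵥ gl.1 + P *ᵥ gl.2 = F ∧ Pᵀ *ᵥ gl.1 = 0 := by
  have hP : Injective P.mulVec := mulVec_injective_of_rank_eq (by rw [hrank, Fintype.card_fin])
  have hΦ_definite : ∀ γ, Pᵀ *ᵥ γ = 0 → γ ⬝ᵥ (Φ *ᵥ γ) = 0 → γ = 0 := by
    intro γ hγ hQ
    obtain ⟨h₀, h₁⟩ := sum_eq_zero_and_sum_smul_eq_zero_of_transpose_mulVec_eq_zero hP₁ hP₂ hγ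
    simp only [dotProduct_mulVec_self, hΦ] at hQ
    exact eq_zero_of_sum_mul_mul_norm_sub_pow_three_eq_zero hx h₀ h₁ hQ
  exact fun F => existsUnique_saddlePoint
    (fun γ l h₁ h₂ => saddlePoint_homogeneous_eq_zero hP hΦ_definite h₁ h₂) F 0
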